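/- arXiv:1304.4103 — 3 statements merged into one kernel-verified Lean document; each statement's English description precedes it below -/
import Mathlib

section
/- Let h > 0 and k > 0 with k·h ≤ 2√2. Then for ξ ∈ [0, √2·π/h], one has σ^{fd5}_h(ξ/√2, ξ/√2) = 0 if and only if ξ = (√2/h) · arccos(1 − k²h²/4). -/
/-!
On the diagonal `ξ₁ = ξ₂ = ξ / √2` the symbol is `4 h⁻² (1 - cos t) - k²` with `t = h ξ / √2`, so it
vanishes iff `cos t = 1 - k²h²/4`. The hypothesis `0 < k h ≤ 2√2` puts this value in `[-1, 1]`, and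
`ξ ∈ [0, √2 π / h]` puts `t` in `[0, π]`, where `cos` is inverted by `arccos`.
-/

/-- Symbol of the standard 5-point finite difference Helmholtz operator. -/
noncomputable def sigmaFd5 (h k ξ₁ ξ₂ : ℝ) : ℝ :=
  h ^ (-2 : ℤ) * (4 - 2 * Real.cos (h * ξ₁) - 2 * Real.cos (h * ξ₂)) - k ^ 2

open Real Set

lemma sigmaFd5_diag_eq_zero_iff {h : ℝ} (hh : h ≠ 0) (k x : ℝ) :
    sigmaFd5 h k x x = 0 ↔ cos (h * x) = 1 - k ^ 2 * h ^ 2 / 4 := by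
  have hh2 : h ^ 2 ≠ 0 := pow_ne_zero 2 hh
  rw [sigmaFd5, zpow_neg, zpow_two, ← sq, sub_eq_zero, inv_mul_eq_div, div_eq_iff hh2]
  constructor <;> intro H <;> linarith

lemma cos_eq_iff_eq_arccos {t c : ℝ} (ht : t ∈ Icc 0 π) (hc : c ∈ Icc (-1) 1) :
    cos t = c ↔ t = arccos c :=
  ⟨fun H => (arccos_eq_of_eq_cos ht.1 ht.2 H.symm).symm, fun H => H ▸ cos_arccos hc.1 hc.2⟩

lemma one_sub_sq_div_four_mem_Icc {a : ℝ} (ha₀ : 0 ≤ a) (ha : a ≤ 2 * √2) :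
    1 - a ^ 2 / 4 ∈ Icc (-1) 1 := by
  have hsq : a ^ 2 ≤ 8 := by
    calc a ^ 2 ≤ (2 * √2) ^ 2 := pow_le_pow_left₀ ha₀ ha 2
      _ = 8 := by rw [mul_pow, sq_sqrt zero_le_two]; norm_num
  constructor <;> nlinarith

lemma mul_div_sqrt_two_mem_Icc {h ξ : ℝ} (hh : 0 < h) (hξ : ξ ∈ Icc 0 (√2 * π / h)) :
    h * (ξ / √2) ∈ Icc 0 π := by
  have hs : 0 < √2 := by positivity
  refine ⟨by have := hξ.1; positivity, ?_⟩
  rw [mul_div_assoc', div_le_iff₀ hs, mul_comm π]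
  exact (le_div_iff₀' hh).mp hξ.2

/-- diagonal zero of the fd5 symbol. -/
theorem stmt2 (h k : ℝ) (hh : 0 < h) (hk : 0 < k)
    (hkh : k * h ≤ 2 * Real.sqrt 2)
    (ξ : ℝ) (hξ : ξ ∈ Set.Icc 0 (Real.sqrt 2 * Real.pi / h)) :
    sigmaFd5 h k (ξ / Real.sqrt 2) (ξ / Real.sqrt 2) = 0 ↔
      ξ = Real.sqrt 2 / h * Real.arccos (1 - k ^ 2 * h ^ 2 / 4) := by
  have hc : 1 - k ^ 2 * h ^ 2 / 4 ∈ Icc (-1) 1 := by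
    simpa only [mul_pow] using one_sub_sq_div_four_mem_Icc (mul_pos hk hh).le hkh
  rw [sigmaFd5_diag_eq_zero_iff hh.ne', cos_eq_iff_eq_arccos (mul_div_sqrt_two_mem_Icc hh hξ) hc]
  have hs : √2 ≠ 0 := by positivity
  constructor <;> intro H
  · rw [← H]; field_simp
  · rw [H]; field_simp
end

section
/- Let h > 0, k ∈ ℝ, and let (c, s) be a unit vector with c ≥ 0, s ≥ 0 and c² + s² = 1. Then the function ξ ↦ σ^{fd5}_h(ξc, ξs) is strictly increasing on the interval [0, π/h]. -/
open Real Set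

section CosAlongRay

variable {h a : ℝ}

lemma mapsTo_mul_mul_Icc_zero_pi (hh : 0 < h) (ha0 : 0 ≤ a) (ha1 : a ≤ 1) :
    MapsTo (fun ξ => h * (ξ * a)) (Icc 0 (π / h)) (Icc 0 π) := by
  rintro ξ ⟨hξ0, hξπ⟩
  have hhξ : h * ξ ≤ π := by rwa [le_div_iff₀' hh] at hξπ
  refine ⟨by positivity, ?_⟩
  calc h * (ξ * a) = h * ξ * a := by ring
    _ ≤ h * ξ * 1 := by gcongr
    _ ≤ π := by linarith

lemma antitoneOn_cos_mul_mul (hh : 0 < h) (ha0 : 0 ≤ a) (ha1 : a ≤ 1) :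
    AntitoneOn (fun ξ => cos (h * (ξ * a))) (Icc 0 (π / h)) :=
  antitoneOn_cos.comp_MonotoneOn
    (fun _ _ _ _ _ => by gcongr) (mapsTo_mul_mul_Icc_zero_pi hh ha0 ha1)

lemma strictAntiOn_cos_mul_mul (hh : 0 < h) (ha0 : 0 < a) (ha1 : a ≤ 1) :
    StrictAntiOn (fun ξ => cos (h * (ξ * a))) (Icc 0 (π / h)) :=
  strictAntiOn_cos.comp_strictMonoOn
    (fun _ _ _ _ _ => by gcongr) (mapsTo_mul_mul_Icc_zero_pi hh ha0.le ha1)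

end CosAlongRay

-- One of `c`, `s` is positive, and its term is strictly antitone.
lemma strictAntiOn_cos_mul_mul_add_cos_mul_mul {h c s : ℝ} (hh : 0 < h) (hc : 0 ≤ c)
    (hs : 0 ≤ s) (hcs : c ^ 2 + s ^ 2 = 1) :
    StrictAntiOn (fun ξ => cos (h * (ξ * c)) + cos (h * (ξ * s))) (Icc 0 (π / h)) := by
  have hc1 : c ≤ 1 := by nlinarith [sq_nonneg s]
  have hs1 : s ≤ 1 := by nlinarith [sq_nonneg c]
  rcases hc.eq_or_lt with rfl | hc0
  · have hs0 : 0 < s := by nlinarith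
    exact (antitoneOn_cos_mul_mul hh hc hc1).add_strictAnti (strictAntiOn_cos_mul_mul hh hs0 hs1)
  · exact (strictAntiOn_cos_mul_mul hh hc0 hc1).add_antitone (antitoneOn_cos_mul_mul hh hs hs1)

/-- along a direction in the first quadrant, the fd5 symbol is
strictly increasing in the radial variable on `[0, π/h]`. -/
theorem stmt3 (h k : ℝ) (hh : 0 < h) (c s : ℝ) (hc : 0 ≤ c) (hs : 0 ≤ s)
    (hcs : c ^ 2 + s ^ 2 = 1) :
    StrictMonoOn (fun ξ : ℝ => sigmaFd5 h k (ξ * c) (ξ * s))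
      (Set.Icc 0 (Real.pi / h)) := by
  intro x hx y hy hxy
  have hcos := strictAntiOn_cos_mul_mul_add_cos_mul_mul hh hc hs hcs hx hy hxy
  have hpos : 0 < h ^ (-2 : ℤ) := by positivity
  simp only [sigmaFd5] at hcos ⊢
  linarith [mul_lt_mul_of_pos_left hcos hpos]
end

section
/- Let h > 0, let (c, s) be a unit vector with c ≥ 0, s ≥ 0 and c² + s² = 1, and let k > 0 satisfy k²h² < 4 − 2cos(πc) − 2cos(πs). Then there exists a unique ξ ∈ (0, π/h) such that σ^{fd5}_h(ξc, ξs) = 0. (This ξ is the dispersion wavenumber ξ^{fd5}_h(θ) in the direction (c, s), whose quotient with ω defines the discrete phase slowness.) -/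
/-!
Along the ray `ξ ↦ (ξ c, ξ s)` the symbol equals `h⁻² G(hξ) - k²` with
`G t = 4 - 2 cos (t c) - 2 cos (t s)`. Since `0 ≤ c, s ≤ 1`, both cosines decrease on `[0, π]`,
and one of them strictly, so `G` is a strictly increasing continuous bijection from `[0, π]` onto
`[0, G π]`. The hypothesis `0 < k² h² < G π` then gives exactly one `t ∈ (0, π)` with
`G t = k² h²`, by the intermediate value theorem and injectivity.
-/

open Real Set

theorem existsUnique_mem_Ioo_eq_of_strictMonoOn {α δ : Type*} [TopologicalSpace α]
    [ConditionallyCompleteLinearOrder α] [OrderTopology α] [DenselyOrdered α] [LinearOrder δ]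
    [TopologicalSpace δ] [OrderClosedTopology δ] {f : α → δ} {a b : α} {y : δ} (hab : a ≤ b)
    (hcont : ContinuousOn f (Icc a b)) (hmono : StrictMonoOn f (Icc a b))
    (hy : y ∈ Ioo (f a) (f b)) : ∃! x, x ∈ Ioo a b ∧ f x = y := by
  obtain ⟨x, hx, rfl⟩ := intermediate_value_Ioo hab hcont hy
  exact ⟨x, ⟨hx, rfl⟩, fun x' ⟨hx', hfx'⟩ =>
    hmono.injOn (Ioo_subset_Icc_self hx') (Ioo_subset_Icc_self hx) hfx'⟩

theorem strictMonoOn_four_sub_two_cos_sub_two_cos {c s : ℝ} (hc : 0 ≤ c) (hs : 0 ≤ s)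
    (hcs : c ^ 2 + s ^ 2 = 1) :
    StrictMonoOn (fun t ↦ 4 - 2 * cos (t * c) - 2 * cos (t * s)) (Icc 0 π) := by
  have cos_le {a : ℝ} (ha : 0 ≤ a) (ha1 : a ≤ 1) {x y : ℝ} (hx : x ∈ Icc 0 π) (hy : y ∈ Icc 0 π)
      (hxy : x ≤ y) : cos (y * a) ≤ cos (x * a) :=
    cos_le_cos_of_nonneg_of_le_pi (mul_nonneg hx.1 ha) (by nlinarith [hy.1, hy.2])
      (mul_le_mul_of_nonneg_right hxy ha)
  have cos_lt {a : ℝ} (ha : 0 < a) (ha1 : a ≤ 1) {x y : ℝ} (hx : x ∈ Icc 0 π) (hy : y ∈ Icc 0 π)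
      (hxy : x < y) : cos (y * a) < cos (x * a) :=
    cos_lt_cos_of_nonneg_of_le_pi (mul_nonneg hx.1 ha.le) (by nlinarith [hy.1, hy.2])
      (mul_lt_mul_of_pos_right hxy ha)
  have hc1 : c ≤ 1 := by nlinarith
  have hs1 : s ≤ 1 := by nlinarith
  intro x hx y hy hxy
  obtain hc0 | hs0 : 0 < c ∨ 0 < s := by
    by_contra! h
    nlinarith
  · linarith [cos_lt hc0 hc1 hx hy hxy, cos_le hs hs1 hx hy hxy.le]
  · linarith [cos_le hc hc1 hx hy hxy.le, cos_lt hs0 hs1 hx hy hxy]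

theorem sigmaFd5_eq_zero_iff {h : ℝ} (hh : h ≠ 0) (k ξ₁ ξ₂ : ℝ) :
    sigmaFd5 h k ξ₁ ξ₂ = 0 ↔ 4 - 2 * cos (h * ξ₁) - 2 * cos (h * ξ₂) = k ^ 2 * h ^ 2 := by
  rw [sigmaFd5, sub_eq_zero, zpow_neg, zpow_two, ← sq, inv_mul_eq_iff_eq_mul₀ (pow_ne_zero 2 hh),
    mul_comm (h ^ 2)]

/-- existence and uniqueness of the dispersion wavenumber of the
fd5 operator in a given direction. -/
theorem stmt4 (h k : ℝ) (hh : 0 < h) (c s : ℝ) (hc : 0 ≤ c) (hs : 0 ≤ s)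
    (hcs : c ^ 2 + s ^ 2 = 1) (hk : 0 < k)
    (hkh : k ^ 2 * h ^ 2 < 4 - 2 * Real.cos (Real.pi * c) - 2 * Real.cos (Real.pi * s)) :
    ∃! ξ : ℝ, ξ ∈ Set.Ioo 0 (Real.pi / h) ∧ sigmaFd5 h k (ξ * c) (ξ * s) = 0 := by
  set G : ℝ → ℝ := fun t ↦ 4 - 2 * cos (t * c) - 2 * cos (t * s)
  have hscale : MapsTo (h * ·) (Icc 0 (π / h)) (Icc 0 π) := fun ξ hξ ↦
    ⟨mul_nonneg hh.le hξ.1, (le_div_iff₀' hh).mp hξ.2⟩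
  have hmono : StrictMonoOn (G ∘ (h * ·)) (Icc 0 (π / h)) :=
    (strictMonoOn_four_sub_two_cos_sub_two_cos hc hs hcs).comp
      ((strictMono_mul_left_of_pos hh).strictMonoOn _) hscale
  have hcont : ContinuousOn (G ∘ (h * ·)) (Icc 0 (π / h)) := by fun_prop
  have hends : k ^ 2 * h ^ 2 ∈ Ioo ((G ∘ (h * ·)) 0) ((G ∘ (h * ·)) (π / h)) := by
    simp only [G, Function.comp, mul_div_cancel₀ π hh.ne', mul_zero, zero_mul, cos_zero]
    exact ⟨by norm_num; positivity, hkh⟩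
  simpa only [sigmaFd5_eq_zero_iff hh.ne', G, Function.comp, mul_assoc] using
    existsUnique_mem_Ioo_eq_of_strictMonoOn (by positivity) hcont hmono hends
end
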